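/- (DREM decoupled regression.) Let ψ : ℝ → EuclideanSpace ℝ (Fin n) be continuous, θ ∈ EuclideanSpace ℝ (Fin n), and ρ > 0. Suppose Φ : ℝ → Matrix (Fin n) (Fin n) ℝ and Y : ℝ → EuclideanSpace ℝ (Fin n) are differentiable with Φ'(t) = −ρ • Φ(t) + vecMulVec (ψ(t)) (ψ(t)) and Y'(t) = −ρ • Y(t) + ⟪ψ(t), θ⟫ • ψ(t) for all t ≥ 0, with Φ(0) = 0 and Y(0) = 0. Then for all t ≥ 0, (Φ(t)).adjugate *ᵥ Y(t) = (Φ(t)).det • θ; i.e., the scalar regression 𝕐(t) = Δ(t) • θ holds with Δ := det Φ and 𝕐 := adj(Φ) Y. -/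

import Mathlib

open Matrix
open scoped RealInnerProductSpace

attribute [local instance] Matrix.normedAddCommGroup Matrix.normedSpace

/-- The underlying plain vector of a point of `EuclideanSpace ℝ (Fin n)`. -/
def ev {n : ℕ} (x : EuclideanSpace ℝ (Fin n)) : Fin n → ℝ :=
  (WithLp.equiv 2 (Fin n → ℝ)) x

/-!
The regression error `e = Y - Φ θ` satisfies `e' = -ρ e`: the regressor terms `ψ ψᵀ θ` and
`⟪ψ, θ⟫ ψ` of the two filters cancel. Since `e 0 = 0`, Grönwall gives `e ≡ 0`, i.e. `Y = Φ θ`,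
and multiplying by `adj Φ` turns `adj Φ · Φ` into `det Φ · 1`.
-/

theorem eq_zero_of_hasDerivAt_smul_self {E : Type*} [NormedAddCommGroup E] [NormedSpace ℝ E]
    {f : ℝ → E} {c : ℝ} (hf : ∀ t ≥ (0 : ℝ), HasDerivAt f (c • f t) t) (hf0 : f 0 = 0) :
    ∀ t ≥ (0 : ℝ), f t = 0 := by
  intro t ht
  have hcont : ContinuousOn f (Set.Icc 0 t) := fun s hs =>
    (hf s hs.1).continuousAt.continuousWithinAt
  refine eq_zero_of_abs_deriv_le_mul_abs_self_of_eq_zero_right (K := |c|) hcont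
    (fun s hs => (hf s hs.1).hasDerivWithinAt) hf0 (fun s _ => ?_) t ⟨ht, le_rfl⟩
  rw [norm_smul, Real.norm_eq_abs]

theorem HasDerivAt.ev {n : ℕ} {Y : ℝ → EuclideanSpace ℝ (Fin n)} {Y' : EuclideanSpace ℝ (Fin n)}
    {s : ℝ} (h : HasDerivAt Y Y' s) : HasDerivAt (fun u => ev (Y u)) (ev Y') s :=
  (PiLp.hasFDerivAt_ofLp 2 (Y s)).comp_hasDerivAt s h

theorem HasDerivAt.mulVec_const {m : Type*} [Fintype m] {Φ : ℝ → Matrix m m ℝ}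
    {Φ' : Matrix m m ℝ} {s : ℝ} (h : HasDerivAt Φ Φ' s) (v : m → ℝ) :
    HasDerivAt (fun u => Φ u *ᵥ v) (Φ' *ᵥ v) s := by
  let L : Matrix m m ℝ →ₗ[ℝ] (m → ℝ) :=
    { toFun := fun A => A *ᵥ v
      map_add' := fun A B => add_mulVec A B v
      map_smul' := fun c A => smul_mulVec c A v }
  exact L.toContinuousLinearMap.hasFDerivAt.comp_hasDerivAt s h

theorem HasDerivAt.sub_mulVec_of_kreisselmeier {m : Type*} [Fintype m] {Φ : ℝ → Matrix m m ℝ}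
    {y : ℝ → m → ℝ} {ψ θ : m → ℝ} {ρ s : ℝ}
    (hy : HasDerivAt y ((-ρ) • y s + (ψ ⬝ᵥ θ) • ψ) s)
    (hΦ : HasDerivAt Φ ((-ρ) • Φ s + vecMulVec ψ ψ) s) :
    HasDerivAt (fun u => y u - Φ u *ᵥ θ) ((-ρ) • (y s - Φ s *ᵥ θ)) s := by
  have hcancel : (-ρ) • (y s - Φ s *ᵥ θ)
      = ((-ρ) • y s + (ψ ⬝ᵥ θ) • ψ) - ((-ρ) • Φ s + vecMulVec ψ ψ) *ᵥ θ := by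
    rw [add_mulVec, vecMulVec_mulVec, op_smul_eq_smul, smul_mulVec]
    module
  rw [hcancel]
  exact hy.sub (hΦ.mulVec_const θ)

theorem stmt16_general {n : ℕ} (ψ : ℝ → EuclideanSpace ℝ (Fin n))
    (θ : EuclideanSpace ℝ (Fin n)) (ρ : ℝ)
    (Φ : ℝ → Matrix (Fin n) (Fin n) ℝ)
    (Y : ℝ → EuclideanSpace ℝ (Fin n))
    (hΦ : Differentiable ℝ Φ) (hY : Differentiable ℝ Y)
    (hΦd : ∀ t ≥ (0:ℝ), deriv Φ t = (-ρ) • Φ t + vecMulVec (ev (ψ t)) (ev (ψ t)))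
    (hYd : ∀ t ≥ (0:ℝ), deriv Y t = (-ρ) • Y t + ⟪ψ t, θ⟫ • ψ t)
    (hΦ0 : Φ 0 = 0) (hY0 : Y 0 = 0) :
    ∀ t ≥ (0:ℝ), (Φ t).adjugate *ᵥ ev (Y t) = (Φ t).det • ev θ := by
  have hinner (s : ℝ) : ⟪ψ s, θ⟫ = ev (ψ s) ⬝ᵥ ev θ := by
    rw [EuclideanSpace.inner_eq_star_dotProduct, star_trivial, dotProduct_comm]; rfl
  have hΦ' (s : ℝ) (hs : 0 ≤ s) :
      HasDerivAt Φ ((-ρ) • Φ s + vecMulVec (ev (ψ s)) (ev (ψ s))) s :=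
    hΦd s hs ▸ (hΦ s).hasDerivAt
  have hY' (s : ℝ) (hs : 0 ≤ s) : HasDerivAt (fun u => ev (Y u))
      ((-ρ) • ev (Y s) + (ev (ψ s) ⬝ᵥ ev θ) • ev (ψ s)) s := by
    simpa [hYd s hs, hinner, ev] using (hY s).hasDerivAt.ev
  have hYΦ : ∀ t ≥ (0 : ℝ), ev (Y t) - Φ t *ᵥ ev θ = 0 :=
    eq_zero_of_hasDerivAt_smul_self (fun s hs => (hY' s hs).sub_mulVec_of_kreisselmeier (hΦ' s hs))
      (by simp [hY0, hΦ0, ev])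
  intro t ht
  rw [sub_eq_zero.mp (hYΦ t ht), mulVec_mulVec, adjugate_mul, smul_mulVec, one_mulVec]

/-- DREM decoupled regression: premultiplying the Kreisselmeier extended
regression `Y = Φθ` by `adj(Φ)` decouples it into scalar regressions
`𝕐 = Δ θ` with `Δ = det Φ` and `𝕐 = adj(Φ) Y`. -/
theorem stmt16 {n : ℕ} (ψ : ℝ → EuclideanSpace ℝ (Fin n)) (hψ : Continuous ψ)
    (θ : EuclideanSpace ℝ (Fin n)) (ρ : ℝ) (hρ : 0 < ρ)
    (Φ : ℝ → Matrix (Fin n) (Fin n) ℝ)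
    (Y : ℝ → EuclideanSpace ℝ (Fin n))
    (hΦ : Differentiable ℝ Φ) (hY : Differentiable ℝ Y)
    (hΦd : ∀ t ≥ (0:ℝ), deriv Φ t = (-ρ) • Φ t + vecMulVec (ev (ψ t)) (ev (ψ t)))
    (hYd : ∀ t ≥ (0:ℝ), deriv Y t = (-ρ) • Y t + ⟪ψ t, θ⟫ • ψ t)
    (hΦ0 : Φ 0 = 0) (hY0 : Y 0 = 0) :
    ∀ t ≥ (0:ℝ), (Φ t).adjugate *ᵥ ev (Y t) = (Φ t).det • ev θ :=
  stmt16_general ψ θ ρ Φ Y hΦ hY hΦd hYd hΦ0 hY0
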